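/- An element x ∈ F₂[[q]] satisfies T_q(x) = x if and only if x ∈ {0, 1}, and satisfies T_q(T_q(x)) = x if and only if x ∈ {0, 1, (1+q)·(1+q³)⁻¹, q·(1+q)·(1+q³)⁻¹}. In particular, the unique 2-cycle of T_q is {(1+q)·(1+q³)⁻¹, q·(1+q)·(1+q³)⁻¹}. -/

import Mathlib

open PowerSeries
open scoped Classical

/-- Shift map on `F₂[[q]]`: equals `x / q` whenever `q ∣ x`. -/
noncomputable def divq (x : PowerSeries (ZMod 2)) : PowerSeries (ZMod 2) :=
  PowerSeries.mk fun n => PowerSeries.coeff (n + 1) x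

/-- `T_{A,B}(x) = x/q` if `q ∣ x`, and `(A*x + B)/q` otherwise.  (When `A`, `B`, `x` are
all odd, `A*x + B` is divisible by `q`, so `divq` computes the true quotient there.) -/
noncomputable def Tab (A B x : PowerSeries (ZMod 2)) : PowerSeries (ZMod 2) :=
  if X ∣ x then divq x else divq (A * x + B)

/-!
Multiplying by `q` turns `T_q` into an affine map on each parity class: `q · T_q(x) = x` for even
`x` and `q · T_q(x) = (1 + q) x + 1` for odd `x`. Since `F₂[[q]]` is a domain, each of the two
(resp. four) parity patterns of `x, T_q(x)` gives a linear equation with a unique solution: the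
fixed points are `0, 1`, and the new 2-periodic points solve `(1 + q + q²) x = 1` or `= q`, where
`(1 + q + q²)⁻¹ = (1 + q)(1 + q³)⁻¹` because `(1 + q)(1 + q + q²) = 1 + q³` in characteristic 2.
-/

instance : CharP (PowerSeries (ZMod 2)) 2 :=
  charP_of_injective_ringHom (C_injective (R := ZMod 2)) 2

lemma X_mul_divq {x : PowerSeries (ZMod 2)} (hx : X ∣ x) : X * divq x = x := by
  obtain ⟨y, rfl⟩ := hx
  congr 1
  ext n
  simp [divq, coeff_succ_X_mul]

lemma X_mul_Tab_of_dvd (A B : PowerSeries (ZMod 2)) {x : PowerSeries (ZMod 2)} (hx : X ∣ x) :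
    X * Tab A B x = x := by
  rw [Tab, if_pos hx, X_mul_divq hx]

lemma X_dvd_mul_add_of_not_dvd {A B x : PowerSeries (ZMod 2)} (hA : ¬ X ∣ A) (hB : ¬ X ∣ B)
    (hx : ¬ X ∣ x) : X ∣ A * x + B := by
  simp only [X_dvd_iff, map_add, map_mul] at *
  rw [Fin.eq_one_of_ne_zero _ hA, Fin.eq_one_of_ne_zero _ hB, Fin.eq_one_of_ne_zero _ hx]
  rfl

lemma X_mul_Tab_of_not_dvd {A B x : PowerSeries (ZMod 2)} (hA : ¬ X ∣ A) (hB : ¬ X ∣ B)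
    (hx : ¬ X ∣ x) : X * Tab A B x = A * x + B := by
  rw [Tab, if_neg hx, X_mul_divq (X_dvd_mul_add_of_not_dvd hA hB hx)]

lemma X_mul_Tq_of_not_dvd {x : PowerSeries (ZMod 2)} (hx : ¬ X ∣ x) :
    X * Tab (1 + X) 1 x = (1 + X) * x + 1 :=
  X_mul_Tab_of_not_dvd (by simp [X_dvd_iff]) (by simp [X_dvd_iff]) hx

lemma Tq_zero : Tab (1 + X) 1 0 = 0 :=
  X_mul_cancel (by rw [X_mul_Tab_of_dvd _ _ (dvd_zero X), mul_zero])

lemma Tq_one : Tab (1 + X) 1 1 = 1 :=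
  X_mul_cancel (by
    rw [X_mul_Tq_of_not_dvd (by simp [X_dvd_iff])]
    linear_combination (CharTwo.two_eq_zero : (2 : PowerSeries (ZMod 2)) = 0))

lemma Tq_eq_self_iff (x : PowerSeries (ZMod 2)) : Tab (1 + X) 1 x = x ↔ x = 0 ∨ x = 1 := by
  refine ⟨fun h => ?_, by rintro (rfl | rfl) <;> simp only [Tq_zero, Tq_one]⟩
  by_cases hx : X ∣ x
  · have e := X_mul_Tab_of_dvd (1 + X) 1 hx
    rw [h] at e
    have h1X : (1 - X : PowerSeries (ZMod 2)) ≠ 0 := ne_of_apply_ne constantCoeff (by simp)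
    left
    exact (mul_eq_zero.mp (by linear_combination -e : (1 - X) * x = 0)).resolve_left h1X
  · have e := X_mul_Tq_of_not_dvd hx
    rw [h] at e
    right
    linear_combination -e - (CharTwo.two_eq_zero : (2 : PowerSeries (ZMod 2)) = 0)

lemma one_add_X_mul_inv_one_add_X_pow_three :
    (1 + X) * (1 + X ^ 3 : PowerSeries (ZMod 2))⁻¹ = (1 + X + X ^ 2)⁻¹ := by
  have h : (1 + X) * (1 + X + X ^ 2) = (1 + X ^ 3 : PowerSeries (ZMod 2)) := by
    linear_combination (X + X ^ 2) * (CharTwo.two_eq_zero : (2 : PowerSeries (ZMod 2)) = 0)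
  rw [eq_inv_iff_mul_eq_one (by simp), mul_right_comm, h, PowerSeries.mul_inv_cancel _ (by simp)]

section TwoCycle

local notation "P" => (1 + X + X ^ 2 : PowerSeries (ZMod 2))

lemma one_add_X_add_X_sq_mul_inv : P * P⁻¹ = 1 :=
  PowerSeries.mul_inv_cancel _ (by simp)

lemma Tq_inv_one_add_X_add_X_sq : Tab (1 + X) 1 P⁻¹ = X * P⁻¹ := by
  refine X_mul_cancel ?_
  rw [X_mul_Tq_of_not_dvd (by simp [X_dvd_iff])]
  linear_combination -one_add_X_add_X_sq_mul_inv +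
    (1 + X) * P⁻¹ * (CharTwo.two_eq_zero : (2 : PowerSeries (ZMod 2)) = 0)

lemma Tq_X_mul_inv_one_add_X_add_X_sq : Tab (1 + X) 1 (X * P⁻¹) = P⁻¹ :=
  X_mul_cancel (X_mul_Tab_of_dvd _ _ (dvd_mul_right X _))

lemma eq_of_Tq_Tq_eq_self {x : PowerSeries (ZMod 2)} (h : Tab (1 + X) 1 (Tab (1 + X) 1 x) = x) :
    x = 0 ∨ x = 1 ∨ x = P⁻¹ ∨ x = X * P⁻¹ := by
  have two : (2 : PowerSeries (ZMod 2)) = 0 := CharTwo.two_eq_zero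
  have hP : P ≠ 0 := ne_of_apply_ne constantCoeff (by simp)
  by_cases hx : X ∣ x <;> by_cases hTx : X ∣ Tab (1 + X) 1 x
  · have e1 := X_mul_Tab_of_dvd (1 + X) 1 hx
    have e2 := X_mul_Tab_of_dvd (1 + X) 1 hTx
    rw [h] at e2
    have h1X2 : (1 - X ^ 2 : PowerSeries (ZMod 2)) ≠ 0 := ne_of_apply_ne constantCoeff (by simp)
    left
    exact (mul_eq_zero.mp (by linear_combination -e1 - X * e2 : (1 - X ^ 2) * x = 0)).resolve_left
      h1X2
  · have e1 := X_mul_Tab_of_dvd (1 + X) 1 hx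
    have e2 := X_mul_Tq_of_not_dvd hTx
    rw [h] at e2
    have key : P * x = X := by linear_combination X * e2 + (1 + X) * e1 + (1 + X) * x * two
    right; right; right
    refine mul_left_cancel₀ hP ?_
    rw [key, mul_left_comm, one_add_X_add_X_sq_mul_inv, mul_one]
  · have e1 := X_mul_Tq_of_not_dvd hx
    have e2 := X_mul_Tab_of_dvd (1 + X) 1 hTx
    rw [h] at e2
    have key : P * x = 1 := by linear_combination -e1 - X * e2 + (X ^ 2 * x - 1) * two
    right; right; left
    exact mul_left_cancel₀ hP (by rw [key, one_add_X_add_X_sq_mul_inv])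
  · have e1 := X_mul_Tq_of_not_dvd hx
    have e2 := X_mul_Tq_of_not_dvd hTx
    rw [h] at e2
    right; left
    linear_combination -X * e2 - (1 + X) * e1 - (1 + X + X * x) * two

end TwoCycle

/-- The fixed points of `T_q = T_{1+q,1}` are exactly `0` and `1`, and the points of
period dividing 2 are exactly `0`, `1`, `(1+q)(1+q³)⁻¹`, `q(1+q)(1+q³)⁻¹`; in
particular the unique 2-cycle of `T_q` is `{(1+q)(1+q³)⁻¹, q(1+q)(1+q³)⁻¹}`. -/
theorem Tq_periodic_points (x : PowerSeries (ZMod 2)) :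
    (Tab (1 + X) 1 x = x ↔ x ∈ ({0, 1} : Set (PowerSeries (ZMod 2)))) ∧
    (Tab (1 + X) 1 (Tab (1 + X) 1 x) = x ↔
      x ∈ ({0, 1, (1 + X) * (1 + X ^ 3)⁻¹, X * ((1 + X) * (1 + X ^ 3)⁻¹)} :
        Set (PowerSeries (ZMod 2)))) := by
  simp only [Set.mem_insert_iff, Set.mem_singleton_iff, one_add_X_mul_inv_one_add_X_pow_three]
  refine ⟨Tq_eq_self_iff x, eq_of_Tq_Tq_eq_self, ?_⟩
  rintro (rfl | rfl | rfl | rfl)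
  · rw [Tq_zero, Tq_zero]
  · rw [Tq_one, Tq_one]
  · rw [Tq_inv_one_add_X_add_X_sq, Tq_X_mul_inv_one_add_X_add_X_sq]
  · rw [Tq_X_mul_inv_one_add_X_add_X_sq, Tq_inv_one_add_X_add_X_sq]
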